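/- arXiv:1508.03618 — 2 statements merged into one kernel-verified Lean document; each statement's English description precedes it below -/
import Mathlib

section
/- Let n ≥ 1, let S be an arbitrary real n×n matrix and d ∈ ℝⁿ. Let M be the (2n+1)×(2n+1) real matrix with block form (0 S d; Sᵀ 0 0; dᵀ 0 0) (blocks of sizes n, n, 1). Then M anticommutes with R = diag(−I_n, I_{n+1}), i.e., R·M + M·R = 0, and consequently charpoly(M)(−X) = −charpoly(M)(X); in particular all odd-degree elementary symmetric functions of the eigenvalues of M vanish (M satisfies the Euclidean austere condition). -/
open Polynomial Matrix

/-- The `k`-th elementary symmetric function of the eigenvalues of a square real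
matrix: `(-1)^k` times the coefficient of `X^(m-k)` in the characteristic
polynomial, and `0` when `k` exceeds the size of the matrix. -/
noncomputable def esymmEig {ι : Type*} [Fintype ι] [DecidableEq ι]
    (M : Matrix ι ι ℝ) (k : ℕ) : ℝ :=
  if k ≤ Fintype.card ι then
    (-1) ^ k * M.charpoly.coeff (Fintype.card ι - k)
  else 0

theorem mycoeff (p : ℝ[X]) (i : ℕ) : (p.comp (-X)).coeff i = (-1)^i * p.coeff i := by
  induction p using Polynomial.induction_on' with
  | add p q hp hq => simp [add_comp, hp, hq, mul_add]
  | monomial k a =>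
    rw [monomial_comp, neg_pow, coeff_monomial, mul_comm (C a), mul_assoc]
    rw [show ((-1:ℝ[X])^k) = C ((-1:ℝ)^k) by simp]
    rw [coeff_C_mul, coeff_X_pow_mul']
    by_cases h : k = i
    · simp [h]
    · simp only [h, if_false, mul_zero]
      split_ifs with h2
      · simp [coeff_C, show ¬ (i - k = 0) by omega]
      · simp

/-- The `(2n+1)×(2n+1)` matrix `M = (0 S d; Sᵀ 0 0; dᵀ 0 0)`
anticommutes with `R = diag(-Iₙ, I_{n+1})`, its characteristic polynomial is odd,
and all odd-degree elementary symmetric functions of its eigenvalues vanish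
(the Euclidean austere condition). -/
theorem irreducible_block_is_austere (n : ℕ) (hn : 1 ≤ n)
    (S : Matrix (Fin n) (Fin n) ℝ) (d : Fin n → ℝ)
    (M : Matrix (Fin n ⊕ (Fin n ⊕ Fin 1)) (Fin n ⊕ (Fin n ⊕ Fin 1)) ℝ)
    (hM : M = Matrix.fromBlocks 0
      (fun i j => Sum.elim (fun j' => S i j') (fun _ => d i) j)
      (fun i j => Sum.elim (fun i' => S j i') (fun _ => d j) i) 0)
    (R : Matrix (Fin n ⊕ (Fin n ⊕ Fin 1)) (Fin n ⊕ (Fin n ⊕ Fin 1)) ℝ)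
    (hR : R = Matrix.fromBlocks (-1) 0 0 1) :
    R * M + M * R = 0 ∧
    M.charpoly.comp (-Polynomial.X) = -M.charpoly ∧
    (∀ j : ℕ, esymmEig M (2 * j + 1) = 0) := by
  have hanti : R * M + M * R = 0 := by
    have key : ∀ (B : Matrix (Fin n) (Fin n ⊕ Fin 1) ℝ)
        (Cm : Matrix (Fin n ⊕ Fin 1) (Fin n) ℝ),
        Matrix.fromBlocks (-1 : Matrix (Fin n) (Fin n) ℝ) 0 0 1
            * Matrix.fromBlocks 0 B Cm 0
          + Matrix.fromBlocks 0 B Cm 0 * Matrix.fromBlocks (-1) 0 0 1 = 0 := by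
      intro B Cm
      rw [Matrix.fromBlocks_multiply, Matrix.fromBlocks_multiply,
        ← Matrix.fromBlocks_add]
      ext (i|i) (j|j) <;> simp
    rw [hM, hR]
    exact key _ _
  have hRR : R * R = 1 := by
    rw [hR, Matrix.fromBlocks_multiply, ← Matrix.fromBlocks_one]
    simp
  have h1 : R * M = -(M * R) := eq_neg_of_add_eq_zero_left hanti
  have hRMR : R * M * R = -M := by
    rw [h1, neg_mul, Matrix.mul_assoc, hRR, Matrix.mul_one]
  have hcard : Fintype.card (Fin n ⊕ (Fin n ⊕ Fin 1)) = 2 * n + 1 := by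
    simp [Fintype.card_sum]; ring
  set Rc : Matrix _ _ ℝ[X] := R.map C with hRc
  have hRcRc : Rc * Rc = 1 := by
    rw [hRc, ← Matrix.map_mul, hRR]; simp
  have hconj : charmatrix (-M) = Rc * charmatrix M * Rc := by
    show _ = Rc * (Matrix.scalar _ (X : ℝ[X]) - M.map C) * Rc
    rw [Matrix.mul_sub, Matrix.sub_mul]
    rw [← (Matrix.scalar_commute (X:ℝ[X]) (Commute.all X) Rc).eq]
    rw [Matrix.mul_assoc, hRcRc, Matrix.mul_one]
    rw [hRc, ← Matrix.map_mul, ← Matrix.map_mul, hRMR]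
    show _ = Matrix.scalar _ (X : ℝ[X]) - (-M).map C
    rfl
  have hdetconj : (-M).charpoly = M.charpoly := by
    unfold Matrix.charpoly
    rw [hconj, Matrix.det_mul, Matrix.det_mul]
    rw [mul_comm, ← mul_assoc, ← Matrix.det_mul, hRcRc, Matrix.det_one, one_mul]
  -- odd charpoly
  have hkey : M.charpoly.comp (-Polynomial.X) = -M.charpoly := by
    have φdet : M.charpoly.comp (-X) =
        ((charmatrix M).map (eval₂RingHom C (-X : ℝ[X]))).det := by
      rw [show (charmatrix M).map ⇑(eval₂RingHom C (-X : ℝ[X]))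
          = (eval₂RingHom C (-X : ℝ[X])).mapMatrix (charmatrix M) from rfl,
        ← RingHom.map_det]
      rfl
    have hmapmat : (charmatrix M).map (eval₂RingHom C (-X : ℝ[X]))
        = -(charmatrix (-M)) := by
      ext i j
      by_cases h : i = j
      · subst h
        simp only [Matrix.map_apply, charmatrix_apply_eq, Matrix.neg_apply,
          coe_eval₂RingHom, eval₂_sub, eval₂_X, eval₂_C]
        congr 1
        rw [map_neg]
        ring
      · simp [charmatrix_apply_ne _ _ _ h, charmatrix_apply_ne _ _ _ h]
    rw [φdet, hmapmat, Matrix.det_neg, hcard]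
    rw [show ((-M).charmatrix).det = (-M).charpoly from rfl, hdetconj]
    rw [pow_succ, pow_mul]
    simp
  refine ⟨hanti, hkey, fun j => ?_⟩
  unfold esymmEig
  rw [hcard]
  by_cases hj : 2 * j + 1 ≤ 2 * n + 1
  · rw [if_pos hj]
    have hi : 2 * n + 1 - (2 * j + 1) = 2 * (n - j) := by omega
    have := mycoeff M.charpoly (2 * n + 1 - (2 * j + 1))
    rw [hkey, hi] at this
    simp only [pow_mul, neg_one_sq, one_pow, one_mul, coeff_neg] at this
    rw [hi]
    have : M.charpoly.coeff (2 * (n - j)) = 0 := by linarith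
    rw [this, mul_zero]
  · rw [if_neg hj]
end

section
/- Let k, ℓ ≥ 0 with k + ℓ = n, let P, Q be real symmetric k×k matrices, S a real symmetric ℓ×ℓ matrix, and d ∈ ℝ^ℓ. Let M be the (2n+1)×(2n+1) real symmetric matrix that is block diagonal, with upper-left 2k×2k block (P Q; Q −P) and lower-right (2ℓ+1)×(2ℓ+1) block (0 S d; S 0 0; dᵀ 0 0). Then charpoly(M)(−X) = −charpoly(M)(X); in particular M satisfies the Euclidean austere condition (all odd-degree elementary symmetric functions of its eigenvalues vanish). -/
open Polynomial Matrix

/-!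
`M` is conjugate to `-M`: the orthogonal matrix `diag((0 1; -1 0), (1 0; 0 -1))` anticommutes
with the first block `(P Q; Q -P)` and with the second block, which has the shape `(0 B; C 0)`,
whatever `P, Q, B, C` are. Hence `χ_M(-X) = (-1)^(2n+1) χ_{-M}(X) = -χ_M(X)`, so `χ_M` is odd and
its coefficients of even degree `2n+1 - (2j+1)`, which are up to sign the odd elementary
symmetric functions of the eigenvalues, vanish.
-/

namespace Polynomial
variable {R : Type*} [CommRing R]

theorem coeff_comp_neg_X (p : R[X]) (i : ℕ) :
    (p.comp (-X)).coeff i = (-1) ^ i * p.coeff i := by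
  rw [← neg_one_mul (X : R[X]), ← C_1, ← C_neg, comp_C_mul_X_coeff, mul_comm]

theorem coeff_eq_zero_of_comp_neg_X_eq_neg [NoZeroDivisors R] [CharZero R] {p : R[X]}
    (hp : p.comp (-X) = -p) {i : ℕ} (hi : Even i) : p.coeff i = 0 := by
  have h := congrArg (coeff · i) hp
  simp only [coeff_comp_neg_X, hi.neg_one_pow, one_mul, coeff_neg] at h
  exact CharZero.eq_neg_self_iff.mp h

end Polynomial

namespace Matrix
section Charpoly
variable {n R : Type*} [Fintype n] [DecidableEq n] [CommRing R]

theorem charpoly_comp_neg_X (M : Matrix n n R) :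
    M.charpoly.comp (-X) = (-1) ^ Fintype.card n * (-M).charpoly := by
  have hmap : (charmatrix M).map (compRingHom (-X)) = -charmatrix (-M) := by
    ext i j : 1
    by_cases h : i = j
    · subst h; simp [charmatrix_apply_eq, compRingHom]; ring
    · simp [charmatrix_apply_ne _ _ _ h, compRingHom]
  calc M.charpoly.comp (-X) = compRingHom (-X) (charmatrix M).det := rfl
    _ = ((charmatrix M).map (compRingHom (-X))).det := RingHom.map_det _ _
    _ = (-1) ^ Fintype.card n * (-M).charpoly := by rw [hmap, det_neg, charpoly]

theorem charpoly_neg_of_mul_eq_neg_mul {M : Matrix n n R} (U : (Matrix n n R)ˣ)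
    (hU : U * M = -M * U) : (-M).charpoly = M.charpoly := by
  have : -M = U * M * U⁻¹ := by rw [hU, Units.mul_inv_cancel_right]
  rw [this, mul_assoc, charpoly_mul_comm, mul_assoc, Units.inv_mul, mul_one]

theorem charpoly_comp_neg_X_eq_neg_of_mul_eq_neg_mul {M : Matrix n n R} (U : (Matrix n n R)ˣ)
    (hU : U * M = -M * U) (hn : Odd (Fintype.card n)) :
    M.charpoly.comp (-X) = -M.charpoly := by
  rw [charpoly_comp_neg_X, charpoly_neg_of_mul_eq_neg_mul U hU, hn.neg_one_pow, neg_one_mul]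

end Charpoly

section Blocks
variable (α β γ R : Type*) [Fintype α] [Fintype β] [Fintype γ]
  [DecidableEq α] [DecidableEq β] [DecidableEq γ] [Ring R]

def blockAnticommutant : (Matrix ((α ⊕ α) ⊕ (β ⊕ γ)) ((α ⊕ α) ⊕ (β ⊕ γ)) R)ˣ where
  val := fromBlocks (fromBlocks 0 1 (-1) 0) 0 0 (fromBlocks 1 0 0 (-1))
  inv := fromBlocks (fromBlocks 0 (-1) 1 0) 0 0 (fromBlocks 1 0 0 (-1))
  val_inv := by simp [fromBlocks_multiply, ← fromBlocks_one]
  inv_val := by simp [fromBlocks_multiply, ← fromBlocks_one]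

variable {α β γ R}

theorem blockAnticommutant_mul (P Q : Matrix α α R) (B : Matrix β γ R) (C : Matrix γ β R) :
    blockAnticommutant α β γ R * fromBlocks (fromBlocks P Q Q (-P)) 0 0 (fromBlocks 0 B C 0) =
      -fromBlocks (fromBlocks P Q Q (-P)) 0 0 (fromBlocks 0 B C 0) *
        blockAnticommutant α β γ R := by
  simp [blockAnticommutant, fromBlocks_multiply, fromBlocks_neg]

end Blocks
end Matrix

theorem esymmEig_odd_eq_zero {ι : Type*} [Fintype ι] [DecidableEq ι] {M : Matrix ι ι ℝ}
    (hM : M.charpoly.comp (-X) = -M.charpoly) (hι : Odd (Fintype.card ι)) (j : ℕ) :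
    esymmEig M (2 * j + 1) = 0 := by
  unfold esymmEig
  split_ifs with h
  · obtain ⟨m, hm⟩ := hι
    rw [coeff_eq_zero_of_comp_neg_X_eq_neg hM ⟨m - j, by omega⟩, mul_zero]
  · rfl

theorem reducible_block_is_austere_general (k l : ℕ)
    (P Q : Matrix (Fin k) (Fin k) ℝ)
    (S : Matrix (Fin l) (Fin l) ℝ) (d : Fin l → ℝ)
    (M : Matrix ((Fin k ⊕ Fin k) ⊕ (Fin l ⊕ (Fin l ⊕ Fin 1)))
      ((Fin k ⊕ Fin k) ⊕ (Fin l ⊕ (Fin l ⊕ Fin 1))) ℝ)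
    (hM : M = Matrix.fromBlocks (Matrix.fromBlocks P Q Q (-P)) 0 0
      (Matrix.fromBlocks 0
        (fun i j => Sum.elim (fun j' => S i j') (fun _ => d i) j)
        (fun i j => Sum.elim (fun i' => S j i') (fun _ => d j) i) 0)) :
    M.charpoly.comp (-Polynomial.X) = -M.charpoly ∧
    (∀ j : ℕ, esymmEig M (2 * j + 1) = 0) := by
  have hodd : Odd (Fintype.card ((Fin k ⊕ Fin k) ⊕ (Fin l ⊕ (Fin l ⊕ Fin 1)))) :=
    ⟨k + l, by simp only [Fintype.card_sum, Fintype.card_fin]; ring⟩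
  have hcomp : M.charpoly.comp (-X) = -M.charpoly :=
    charpoly_comp_neg_X_eq_neg_of_mul_eq_neg_mul _ (hM ▸ blockAnticommutant_mul P Q _ _) hodd
  exact ⟨hcomp, esymmEig_odd_eq_zero hcomp hodd⟩

/-- The `(2n+1)×(2n+1)` block-diagonal matrix with upper-left block
`(P Q; Q -P)` (with `P`, `Q` symmetric `k×k`) and lower-right block
`(0 S d; S 0 0; dᵀ 0 0)` (with `S` symmetric `ℓ×ℓ`, `d ∈ ℝ^ℓ`, `k + ℓ = n`)
has odd characteristic polynomial; in particular all odd-degree elementary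
symmetric functions of its eigenvalues vanish (the Euclidean austere condition). -/
theorem reducible_block_is_austere (n k l : ℕ) (hkl : k + l = n)
    (P Q : Matrix (Fin k) (Fin k) ℝ) (hP : P.IsSymm) (hQ : Q.IsSymm)
    (S : Matrix (Fin l) (Fin l) ℝ) (hS : S.IsSymm) (d : Fin l → ℝ)
    (M : Matrix ((Fin k ⊕ Fin k) ⊕ (Fin l ⊕ (Fin l ⊕ Fin 1)))
      ((Fin k ⊕ Fin k) ⊕ (Fin l ⊕ (Fin l ⊕ Fin 1))) ℝ)
    (hM : M = Matrix.fromBlocks (Matrix.fromBlocks P Q Q (-P)) 0 0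
      (Matrix.fromBlocks 0
        (fun i j => Sum.elim (fun j' => S i j') (fun _ => d i) j)
        (fun i j => Sum.elim (fun i' => S j i') (fun _ => d j) i) 0)) :
    M.charpoly.comp (-Polynomial.X) = -M.charpoly ∧
    (∀ j : ℕ, esymmEig M (2 * j + 1) = 0) :=
  reducible_block_is_austere_general k l P Q S d M hM
end
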